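/- Let K be a subfield of ℝ, n ≥ 1, and r ∈ ℝ with r ∉ K and r² ∈ K. Call a vector in ℝ^{n+1} K-rational if all its coordinates lie in K, and say an ℝ-subspace of ℝ^{n+1} is defined over K if it is spanned over ℝ by its K-rational vectors. Let Φ : ℝ^{n+1} → ℝ^{n+1} be the ℝ-linear map (y₀, y₁, …, yₙ) ↦ (r y₀, y₁, …, yₙ), let e₀ = (1, 0, …, 0), let U ⊆ ℝ^{n+1} be a set of K-rational vectors whose first coordinate is 0, and let ξ ∈ ℝ^{n+1} be a K-rational vector with ξ₀ ≠ 0. Then the image Φ(span_ℝ(U ∪ {ξ})) is defined over K if and only if ξ − ξ₀ e₀ ∈ span_ℝ(U); and in that case Φ(span_ℝ(U ∪ {ξ})) = span_ℝ(U ∪ {e₀}). -/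

import Mathlib

/-- The linear map `Φ : ℝ^{n+1} → ℝ^{n+1}`, `(y₀, y₁, …, yₙ) ↦ (r y₀, y₁, …, yₙ)`. -/
noncomputable def stretchFirst (n : ℕ) (r : ℝ) :
    (Fin (n + 1) → ℝ) →ₗ[ℝ] (Fin (n + 1) → ℝ) :=
  LinearMap.pi fun i =>
    if i = 0 then r • (LinearMap.proj i : (Fin (n + 1) → ℝ) →ₗ[ℝ] ℝ)
    else (LinearMap.proj i : (Fin (n + 1) → ℝ) →ₗ[ℝ] ℝ)

/-- A real subspace of `ℝ^{n+1}` is defined over the subfield `K ⊆ ℝ` when it is spanned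
over `ℝ` by its vectors with all coordinates in `K`. -/
def DefinedOver (K : Subfield ℝ) {n : ℕ} (W : Submodule ℝ (Fin (n + 1) → ℝ)) : Prop :=
  W = Submodule.span ℝ {x : Fin (n + 1) → ℝ | x ∈ W ∧ ∀ i, x i ∈ K}

/-!
`Φ` fixes `U` and sends `ξ` to `r ξ₀ e₀ + v` with `v = ξ - ξ₀ e₀`, so the image is the span of
`U ∪ {r ξ₀ e₀ + v}`. If `v ∈ span U` this is `span (U ∪ {e₀})`, visibly defined over `K`.
Otherwise the `K`-rational vector `v` lies outside `span (U ∪ {e₀})`, so a functional `φ` with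
coefficients in `K` kills `e₀` and `U` but not `v`. A `K`-rational vector `t Φ(ξ) + z` of the
image (`z ∈ span U`) has `t φ(v) ∈ K` and first coordinate `t r ξ₀ ∈ K`; since `r ∉ K` this forces
`t = 0`. So all `K`-rational vectors of the image lie in `ker φ`, while `Φ(ξ)` does not.
-/


open Submodule

theorem Subfield.mul_mem_cancel_right {L : Type*} [Field L] (K : Subfield L) {a b : L}
    (hb : b ∈ K) (hb0 : b ≠ 0) : a * b ∈ K ↔ a ∈ K :=
  ⟨fun h => by simpa [hb0] using K.mul_mem h (K.inv_mem hb), fun ha => K.mul_mem ha hb⟩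

theorem Subfield.mul_mem_cancel_left {L : Type*} [Field L] (K : Subfield L) {a b : L}
    (ha : a ∈ K) (ha0 : a ≠ 0) : a * b ∈ K ↔ b ∈ K := by
  rw [mul_comm, K.mul_mem_cancel_right ha ha0]

theorem Submodule.span_insert_smul_add_eq {R M : Type*} [DivisionRing R] [AddCommGroup M]
    [Module R M] {s : Set M} {e v : M} {a : R} (ha : a ≠ 0) (hv : v ∈ span R s) :
    span R (insert (a • e + v) s) = span R (insert e s) := by
  have hv' : v ∈ span R (insert e s) := span_mono (Set.subset_insert _ _) hv
  have hs : s ⊆ span R (insert (a • e + v) s) := subset_span.trans' (Set.subset_insert _ _)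
  apply le_antisymm <;> refine span_le.2 (Set.insert_subset_iff.2 ⟨?_, ?_⟩)
  · exact add_mem (smul_mem _ _ (subset_span (Set.mem_insert _ _))) hv'
  · exact subset_span.trans' (Set.subset_insert _ _)
  · have h : a⁻¹ • ((a • e + v) - v) ∈ span R (insert (a • e + v) s) :=
      smul_mem _ _ (sub_mem (subset_span (Set.mem_insert _ _)) (span_le.2 hs hv))
    rwa [add_sub_cancel_right, inv_smul_smul₀ ha] at h
  · exact hs

theorem mem_span_of_mem_span_insert_single {R ι : Type*} [Ring R] [DecidableEq ι] {i : ι}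
    {s : Set (ι → R)} (hs : ∀ u ∈ s, u i = 0) {v : ι → R} (hvi : v i = 0)
    (hv : v ∈ span R (insert (Pi.single i 1) s)) : v ∈ span R s := by
  obtain ⟨a, z, hz, rfl⟩ := mem_span_insert.1 hv
  have hzi : z i = 0 := (span_le (p := LinearMap.ker (LinearMap.proj i))).2 hs hz
  obtain rfl : a = 0 := by simpa [hzi] using hvi
  simpa using hz

theorem exists_rational_dual_of_notMem_span {L ι : Type*} [Field L] [Fintype ι]
    (K : Subfield L) {T : Set (ι → L)} (hT : ∀ t ∈ T, ∀ i, t i ∈ K)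
    {x : ι → L} (hxK : ∀ i, x i ∈ K) (hx : x ∉ span L T) :
    ∃ φ : (ι → L) →ₗ[L] L, (∀ y : ι → L, (∀ i, y i ∈ K) → φ y ∈ K) ∧
      φ x ≠ 0 ∧ ∀ t ∈ T, φ t = 0 := by
  classical
  let incl : (ι → K) →ₗ[K] (ι → L) := LinearMap.compLeft (Algebra.linearMap K L) ι
  have lift (y : ι → L) (hy : ∀ i, y i ∈ K) : ∃ y', incl y' = y := ⟨fun i => ⟨y i, hy i⟩, rfl⟩
  obtain ⟨x, rfl⟩ := lift x hxK
  have hspan : span K (incl ⁻¹' T) ≤ ((span L T).restrictScalars K).comap incl :=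
    span_le.2 fun y hy => subset_span hy
  obtain ⟨ψ, hψx, hψT⟩ := exists_le_ker_of_notMem fun h => hx (hspan h)
  -- `ψ` is the dot product with `c ∈ K^ι`; dotting with `c` over `L` extends it to `L^ι`.
  let c := (dotProductEquiv K ι).symm ψ
  have extends_ψ (y : ι → K) : dotProductEquiv L ι (incl c) (incl y) = ψ y := by
    rw [← LinearEquiv.apply_symm_apply (dotProductEquiv K ι) ψ]
    exact (RingHom.map_dotProduct K.subtype c y).symm
  refine ⟨dotProductEquiv L ι (incl c), fun y hy => ?_, ?_, fun t ht => ?_⟩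
  · obtain ⟨y, rfl⟩ := lift y hy
    rw [extends_ψ]
    exact (ψ y).2
  · rw [extends_ψ]
    exact_mod_cast hψx
  · obtain ⟨t, rfl⟩ := lift t (hT _ ht)
    rw [extends_ψ, hψT (subset_span ht)]
    rfl

section stretchFirst

variable {n : ℕ} {r : ℝ}

@[simp]
theorem stretchFirst_apply_zero (x : Fin (n + 1) → ℝ) : stretchFirst n r x 0 = r * x 0 := by
  simp [stretchFirst]

@[simp]
theorem stretchFirst_apply_of_ne_zero (x : Fin (n + 1) → ℝ) {i : Fin (n + 1)} (hi : i ≠ 0) :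
    stretchFirst n r x i = x i := by
  simp [stretchFirst, hi]

theorem stretchFirst_eq_self {x : Fin (n + 1) → ℝ} (hx : x 0 = 0) : stretchFirst n r x = x := by
  funext i
  rcases eq_or_ne i 0 with rfl | hi
  · simp [hx]
  · simp [hi]

theorem stretchFirst_eq_smul_single_add (x : Fin (n + 1) → ℝ) :
    stretchFirst n r x = (r * x 0) • Pi.single 0 1 + (x - x 0 • Pi.single 0 1) := by
  funext i
  rcases eq_or_ne i 0 with rfl | hi
  · simp
  · simp [hi]

theorem map_stretchFirst_span_insert {U : Set (Fin (n + 1) → ℝ)} (hU : ∀ u ∈ U, u 0 = 0)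
    (ξ : Fin (n + 1) → ℝ) :
    map (stretchFirst n r) (span ℝ (insert ξ U)) = span ℝ (insert (stretchFirst n r ξ) U) := by
  rw [map_span, Set.image_insert_eq, Set.image_congr fun u hu => stretchFirst_eq_self (hU u hu),
    Set.image_id']

end stretchFirst

theorem definedOver_span (K : Subfield ℝ) {n : ℕ} {S : Set (Fin (n + 1) → ℝ)}
    (hS : ∀ s ∈ S, ∀ i, s i ∈ K) : DefinedOver K (span ℝ S) :=
  le_antisymm (span_mono fun s hs => ⟨subset_span hs, hS s hs⟩) (span_le.2 fun _ hx => hx.1)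

theorem not_definedOver_span_insert (K : Subfield ℝ) {n : ℕ} {U : Set (Fin (n + 1) → ℝ)}
    (hU : ∀ u ∈ U, u 0 = 0) {y : Fin (n + 1) → ℝ} (hy : y 0 ∉ K)
    (φ : (Fin (n + 1) → ℝ) →ₗ[ℝ] ℝ) (hφK : ∀ x : Fin (n + 1) → ℝ, (∀ i, x i ∈ K) → φ x ∈ K)
    (hφU : ∀ u ∈ U, φ u = 0) (hφy : φ y ∈ K) (hφy0 : φ y ≠ 0) :
    ¬ DefinedOver K (span ℝ (insert y U)) := by
  have hUker : span ℝ U ≤ LinearMap.ker φ ⊓ LinearMap.ker (LinearMap.proj 0) :=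
    span_le.2 fun u hu => ⟨hφU u hu, hU u hu⟩
  have hrat : {x | x ∈ span ℝ (insert y U) ∧ ∀ i, x i ∈ K} ⊆ LinearMap.ker φ := by
    rintro x ⟨hx, hxK⟩
    obtain ⟨t, z, hz, rfl⟩ := mem_span_insert.1 hx
    obtain ⟨hzφ, hz0⟩ := hUker hz
    have hφx : φ (t • y + z) = t * φ y := by simpa using hzφ
    have hx0 : (t • y + z) 0 = t * y 0 := by simpa using hz0
    suffices t = 0 by rw [SetLike.mem_coe, LinearMap.mem_ker, hφx, this, zero_mul]
    by_contra ht
    have htK : t ∈ K := (K.mul_mem_cancel_right hφy hφy0).1 (hφx ▸ hφK _ hxK)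
    exact hy ((K.mul_mem_cancel_left htK ht).1 (hx0 ▸ hxK 0))
  intro hdef
  have hle : span ℝ (insert y U) ≤ LinearMap.ker φ := by
    rw [hdef]
    exact span_le.2 hrat
  exact hφy0 (hle (subset_span (Set.mem_insert _ _)))

theorem image_defined_over_iff_general (K : Subfield ℝ) (n : ℕ)
    (r : ℝ) (hrK : r ∉ K)
    (U : Set (Fin (n + 1) → ℝ)) (hU : ∀ u ∈ U, (∀ i, u i ∈ K) ∧ u 0 = 0)
    (ξ : Fin (n + 1) → ℝ) (hξ : ∀ i, ξ i ∈ K) (hξ0 : ξ 0 ≠ 0)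
    (e₀ : Fin (n + 1) → ℝ) (he₀ : e₀ = Pi.single 0 1) :
    (DefinedOver K (Submodule.map (stretchFirst n r) (Submodule.span ℝ (insert ξ U))) ↔
        ξ - ξ 0 • e₀ ∈ Submodule.span ℝ U) ∧
    (ξ - ξ 0 • e₀ ∈ Submodule.span ℝ U →
      Submodule.map (stretchFirst n r) (Submodule.span ℝ (insert ξ U)) =
        Submodule.span ℝ (insert e₀ U)) := by
  have hU0 : ∀ u ∈ U, u 0 = 0 := fun u hu => (hU u hu).2
  have he₀K : ∀ i, e₀ i ∈ K := fun i => by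
    rw [he₀, Pi.single_apply]
    split_ifs
    exacts [K.one_mem, K.zero_mem]
  have hTK : ∀ t ∈ insert e₀ U, ∀ i, t i ∈ K :=
    Set.forall_mem_insert.2 ⟨he₀K, fun u hu => (hU u hu).1⟩
  have hΦξ : stretchFirst n r ξ = (r * ξ 0) • e₀ + (ξ - ξ 0 • e₀) :=
    he₀ ▸ stretchFirst_eq_smul_single_add ξ
  have hspan (hv : ξ - ξ 0 • e₀ ∈ span ℝ U) :
      span ℝ (insert (stretchFirst n r ξ) U) = span ℝ (insert e₀ U) := by
    have hr : r ≠ 0 := by rintro rfl; exact hrK K.zero_mem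
    rw [hΦξ, span_insert_smul_add_eq (mul_ne_zero hr hξ0) hv]
  rw [map_stretchFirst_span_insert hU0]
  refine ⟨⟨fun hdef => ?_, fun hv => hspan hv ▸ definedOver_span K hTK⟩, hspan⟩
  by_contra hv
  have hvK : ∀ i, (ξ - ξ 0 • e₀) i ∈ K := fun i => K.sub_mem (hξ i) (K.mul_mem (hξ 0) (he₀K i))
  obtain ⟨φ, hφK, hφv, hφT⟩ := exists_rational_dual_of_notMem_span K hTK hvK fun h =>
    hv (mem_span_of_mem_span_insert_single hU0 (by simp [he₀]) (he₀ ▸ h))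
  have hφξ : φ (stretchFirst n r ξ) = φ (ξ - ξ 0 • e₀) := by
    rw [hΦξ, map_add, map_smul, hφT _ (Set.mem_insert _ _), smul_zero, zero_add]
  have hrξ : stretchFirst n r ξ 0 ∉ K := by
    rw [stretchFirst_apply_zero, K.mul_mem_cancel_right (hξ 0) hξ0]
    exact hrK
  exact not_definedOver_span_insert K hU0 hrξ φ hφK
    (fun u hu => hφT u (Set.mem_insert_of_mem _ hu)) (hφξ ▸ hφK _ hvK) (hφξ ▸ hφv) hdef

/-- Let `r ∈ ℝ` with `r ∉ K`, `r² ∈ K`, let `U` be a set of `K`-rational vectors with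
vanishing first coordinate, and `ξ` a `K`-rational vector with `ξ₀ ≠ 0`.  Then
`Φ(span_ℝ(U ∪ {ξ}))` is defined over `K` iff `ξ − ξ₀ e₀ ∈ span_ℝ U`, and in that case
`Φ(span_ℝ(U ∪ {ξ})) = span_ℝ(U ∪ {e₀})`. -/
theorem image_defined_over_iff (K : Subfield ℝ) (n : ℕ) (hn : 1 ≤ n)
    (r : ℝ) (hrK : r ∉ K) (hr2 : r ^ 2 ∈ K)
    (U : Set (Fin (n + 1) → ℝ)) (hU : ∀ u ∈ U, (∀ i, u i ∈ K) ∧ u 0 = 0)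
    (ξ : Fin (n + 1) → ℝ) (hξ : ∀ i, ξ i ∈ K) (hξ0 : ξ 0 ≠ 0)
    (e₀ : Fin (n + 1) → ℝ) (he₀ : e₀ = Pi.single 0 1) :
    (DefinedOver K (Submodule.map (stretchFirst n r) (Submodule.span ℝ (insert ξ U))) ↔
        ξ - ξ 0 • e₀ ∈ Submodule.span ℝ U) ∧
    (ξ - ξ 0 • e₀ ∈ Submodule.span ℝ U →
      Submodule.map (stretchFirst n r) (Submodule.span ℝ (insert ξ U)) =
        Submodule.span ℝ (insert e₀ U)) :=
  image_defined_over_iff_general K n r hrK U hU ξ hξ hξ0 e₀ he₀
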